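/- Let d ≥ 2 be an even integer and Θ = (X₁,X₂) a d-small symbol with defining intervals whose middle region has cardinality 0, with right region [m+1, m+d/2] in row r and left region in row l = 3 − r. Then the d/2-cohooks of Θ are exactly the pairs (m+i, m+i−d/2) in row r for those indices 1 ≤ i ≤ d/2 with w_i = ∧ in w_ud(Θ); in particular Θ has no d/2-cohook in row l, and Θ has no d/2-cohook at all if and only if w_ud(Θ) contains no letter ∧. -/

import Mathlib

open scoped Classical

/-- A β-set: a set of integers containing all sufficiently small integers
and no sufficiently large ones. -/
def IsBetaSet (X : Set ℤ) : Prop :=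
  (∃ c : ℤ, ∀ z : ℤ, z < c → z ∈ X) ∧ (∃ C : ℤ, ∀ z : ℤ, C ≤ z → z ∉ X)

/-- `topB X = max X`. -/
noncomputable def topB (X : Set ℤ) : ℤ := sSup X

/-- `botB X = max {z | every integer < z lies in X}`. -/
noncomputable def botB (X : Set ℤ) : ℤ := sSup {z : ℤ | ∀ w : ℤ, w < z → w ∈ X}

/-- The charge `s(X)` of a β-set `X`, computed with the cutoff `c = botB X`. -/
noncomputable def chargeB (X : Set ℤ) : ℤ :=
  ((X ∩ Set.Ici (botB X)).ncard : ℤ) + botB X - 1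

/-- `elemSeq X j` is the `(j+1)`-st largest element of the β-set `X`. -/
noncomputable def elemSeq (X : Set ℤ) : ℕ → ℤ
  | 0 => sSup X
  | n + 1 => sSup (X ∩ Set.Iio (elemSeq X n))

/-- The partition `λ(X)` of a β-set `X`, `0`-indexed: `partB X j = λ_{j+1}`,
recovered from `x_j = s(X) + λ_j - j + 1` where `x_j` is the `j`-th largest element. -/
noncomputable def partB (X : Set ℤ) (j : ℕ) : ℕ :=
  (elemSeq X j - chargeB X + j).toNat

/-- The size `|λ(X)|` of the partition of a β-set `X`. -/
noncomputable def sizeB (X : Set ℤ) : ℕ := ∑ᶠ j : ℕ, partB X j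

/-- A partition, encoded as a weakly decreasing eventually zero function (0-indexed). -/
def IsPartition (μ : ℕ → ℕ) : Prop :=
  (∀ j, μ (j + 1) ≤ μ j) ∧ ∃ N, ∀ j, N ≤ j → μ j = 0

/-- The β-set `{s + λ_j - j + 1 : j ≥ 1}` of the partition `μ` with charge `s`. -/
def betaOf (μ : ℕ → ℕ) (s : ℤ) : Set ℤ :=
  {x : ℤ | ∃ j : ℕ, x = s + (μ j : ℤ) - (j : ℤ)}

/-- The symbol `Θ = (X₁, X₂)` is `d`-small with defining intervals
`I₁ = [a₁,b₁]` and `I₂ = [a₂,b₂]`. -/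
structure IsDSmallWith (d : ℤ) (X₁ X₂ : Set ℤ) (a₁ b₁ a₂ b₂ : ℤ) : Prop where
  len₁ : b₁ - a₁ = d / 2 - 1
  len₂ : b₂ - a₂ = d / 2 - 1
  bot₁ : a₁ ≤ botB X₁
  bot₂ : a₂ ≤ botB X₂
  top₁ : topB X₁ ≤ b₁
  top₂ : topB X₂ ≤ b₂
  cong : d ∣ b₂ - (b₁ + d / 2)

/-- The symbol `Θ = (X₁, X₂)` is `d`-small: it admits some pair of defining intervals. -/
def IsDSmall (d : ℤ) (X₁ X₂ : Set ℤ) : Prop :=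
  ∃ a₁ b₁ a₂ b₂ : ℤ, IsDSmallWith d X₁ X₂ a₁ b₁ a₂ b₂

/-- The row (`1` or `2`) containing the right region. -/
def rightRow (b₁ b₂ : ℤ) : ℕ := if b₁ < b₂ then 2 else 1

/-- The row, as a β-set, containing the right region. -/
def rightSet (X₁ X₂ : Set ℤ) (b₁ b₂ : ℤ) : Set ℤ := if b₁ < b₂ then X₂ else X₁

/-- The row, as a β-set, containing the left region. -/
def leftSet (X₁ X₂ : Set ℤ) (b₁ b₂ : ℤ) : Set ℤ := if b₁ < b₂ then X₁ else X₂

/-- The cardinality `kd` of the middle region. -/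
def middleLen (d b₁ b₂ : ℤ) : ℤ := |b₂ - b₁| - d / 2

/-- The alphabet `{∧, ∨, ×, ∘}` of up-down diagrams: `up = ∧`, `dn = ∨`,
`cross = ×`, `circ = ∘`. -/
inductive UD : Type
  | up
  | dn
  | cross
  | circ
deriving DecidableEq

/-- The up-down diagram `w_ud(Θ)` of a `d`-small symbol with defining intervals:
`wud d X₁ X₂ b₁ b₂ i` is the letter `w_i` for `1 ≤ i ≤ d/2`.  Here the right
region is `[m+1, m+d/2]` with `m = max b₁ b₂ - d/2`, `β_i = m + i`, and
`β_i - kd - d/2 = β_i - |b₂ - b₁|`. -/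
noncomputable def wud (d : ℤ) (X₁ X₂ : Set ℤ) (b₁ b₂ : ℤ) (i : ℤ) : UD :=
  if (max b₁ b₂ - d / 2 + i) ∈ rightSet X₁ X₂ b₁ b₂ then
    if (max b₁ b₂ - d / 2 + i) - |b₂ - b₁| ∈ leftSet X₁ X₂ b₁ b₂ then UD.cross else UD.up
  else
    if (max b₁ b₂ - d / 2 + i) - |b₂ - b₁| ∈ leftSet X₁ X₂ b₁ b₂ then UD.dn else UD.circ

/-- Removing an `e`-cohook in row `1` (the rows get interchanged afterwards). -/
def RemoveCohookRow1 (e : ℤ) (Θ Θ' : Set ℤ × Set ℤ) : Prop :=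
  ∃ x : ℤ, x ∈ Θ.1 ∧ x - e ∉ Θ.2 ∧ Θ' = (Θ.2 ∪ {x - e}, Θ.1 \ {x})

/-- Removing an `e`-cohook in row `2` (the rows get interchanged afterwards). -/
def RemoveCohookRow2 (e : ℤ) (Θ Θ' : Set ℤ × Set ℤ) : Prop :=
  ∃ x : ℤ, x ∈ Θ.2 ∧ x - e ∉ Θ.1 ∧ Θ' = (Θ.2 \ {x}, Θ.1 ∪ {x - e})

/-- Removing an `e`-cohook. -/
def RemoveCohook (e : ℤ) (Θ Θ' : Set ℤ × Set ℤ) : Prop :=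
  RemoveCohookRow1 e Θ Θ' ∨ RemoveCohookRow2 e Θ Θ'

/-- The symbol `Θ` has an `e`-cohook. -/
def HasCohook (e : ℤ) (Θ : Set ℤ × Set ℤ) : Prop :=
  (∃ x : ℤ, x ∈ Θ.1 ∧ x - e ∉ Θ.2) ∨ (∃ x : ℤ, x ∈ Θ.2 ∧ x - e ∉ Θ.1)

/-- `C` is an `e`-cocore of `Θ`: a symbol with no `e`-cohooks obtained from `Θ`
by a finite sequence of `e`-cohook removals. -/
def IsCocoreOf (e : ℤ) (Θ C : Set ℤ × Set ℤ) : Prop :=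
  Relation.ReflTransGen (RemoveCohook e) Θ C ∧ ¬ HasCohook e C

/-- The `n`-fold composition of a relation. -/
def RelPow {α : Type*} (R : α → α → Prop) : ℕ → α → α → Prop
  | 0 => Eq
  | n + 1 => fun a c => ∃ b, R a b ∧ RelPow R n b c

/-- `(a, b)` (row `a`, column `b`, both `1`-indexed) is a box of the partition `μ`
(`μ` is `0`-indexed, so `μ (a-1)` is the `a`-th part `λ_a`). -/
def IsBox (μ : ℕ → ℕ) (a b : ℕ) : Prop := 1 ≤ a ∧ 1 ≤ b ∧ b ≤ μ (a - 1)

/-- `(a, b)` is an addable box of `μ`: adjoining it yields a partition. -/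
def IsAddableBox (μ : ℕ → ℕ) (a b : ℕ) : Prop :=
  1 ≤ a ∧ b = μ (a - 1) + 1 ∧ (a = 1 ∨ b ≤ μ (a - 2))

/-- `(a, b)` is a removable box of `μ`: deleting it yields a partition. -/
def IsRemovableBox (μ : ℕ → ℕ) (a b : ℕ) : Prop :=
  1 ≤ a ∧ b = μ (a - 1) ∧ 1 ≤ b ∧ μ a < b

/-- The charged content `t + b - a` of the box in row `a` and column `b`,
with respect to the charge `t`. -/
def chCont (t : ℤ) (a b : ℕ) : ℤ := t + (b : ℤ) - (a : ℤ)

/-- Selecting the component `j ∈ {1, 2}` of a bipartition. -/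
def compPart (μ₁ μ₂ : ℕ → ℕ) (j : ℕ) : ℕ → ℕ := if j = 1 then μ₁ else μ₂

/-- Selecting the component `j ∈ {1, 2}` of a pair of charges. -/
def compT (t₁ t₂ : ℤ) (j : ℕ) : ℤ := if j = 1 then t₁ else t₂

/-- The box `(a, b)` in component `j` is a good removable `i`-box of the
bipartition `(μ₁, μ₂)` with charges `(t₁, t₂)`, where `r` is the row containing
the right region: it is a removable box of charged content `≡ i (mod d)` and
there is no addable box `A` of either component with charged content `≡ i (mod d)`
such that either `A` has strictly larger charged content, or `A` has equal
charged content and lies in component `r`. -/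
def IsGoodRemovableBox (d : ℤ) (μ₁ μ₂ : ℕ → ℕ) (t₁ t₂ : ℤ) (r : ℕ) (i : ℤ)
    (j a b : ℕ) : Prop :=
  (j = 1 ∨ j = 2) ∧ IsRemovableBox (compPart μ₁ μ₂ j) a b ∧
    d ∣ chCont (compT t₁ t₂ j) a b - i ∧
    ∀ j' a' b' : ℕ, (j' = 1 ∨ j' = 2) → IsAddableBox (compPart μ₁ μ₂ j') a' b' →
      d ∣ chCont (compT t₁ t₂ j') a' b' - i →
      ¬ (chCont (compT t₁ t₂ j) a b < chCont (compT t₁ t₂ j') a' b' ∨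
        (chCont (compT t₁ t₂ j') a' b' = chCont (compT t₁ t₂ j) a b ∧ j' = r))

/-- The position of a letter in the order `× < ∧ < ∨ < ∘`. -/
def udIdx : UD → ℕ
  | UD.cross => 0
  | UD.up => 1
  | UD.dn => 2
  | UD.circ => 3

/-- The word `w₁ ⋯ w_{d/2}` reads `×^α ∧^w ∨^h ∘^β`: all `×`'s first, then all
`∧`'s, then all `∨`'s, then all `∘`'s. -/
def SortedUD (d : ℤ) (w : ℤ → UD) : Prop :=
  ∀ i j : ℤ, 1 ≤ i → i ≤ j → j ≤ d / 2 → udIdx (w i) ≤ udIdx (w j)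

/-- The number of occurrences of the letter `u` in the word `w₁ ⋯ w_{d/2}`. -/
noncomputable def countUD (d : ℤ) (w : ℤ → UD) (u : UD) : ℕ :=
  ((Finset.Icc (1 : ℤ) (d / 2)).filter fun i => w i = u).card

/-- `w'` is obtained from `w` by permuting the letters `∧` and `∨` among the
positions carrying `∧` or `∨`, leaving every `×` and `∘` in place. -/
def PermUpDn (d : ℤ) (w w' : ℤ → UD) : Prop :=
  (∀ i : ℤ, 1 ≤ i → i ≤ d / 2 →
    ((w' i = UD.cross ↔ w i = UD.cross) ∧ (w' i = UD.circ ↔ w i = UD.circ))) ∧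
  countUD d w' UD.up = countUD d w UD.up

/-- Replace every letter `∧` by `∨`, leaving the other letters unchanged. -/
def replaceUp : UD → UD
  | UD.up => UD.dn
  | u => u

/-!
With an empty middle region, put `M = max b₁ b₂` and `e = d/2`. The right row lies in `(-∞, M]`
and contains `(-∞, M - e]`; the left row lies in `(-∞, M - e]` and contains `(-∞, M - 2e]`.
Hence every bead `x` of the left row has `x - e` in the full part of the right row, and a bead
`x` of the right row with `x - e` missing from the left row must lie in the right region
`(M - e, M]`, where this condition is exactly `w_i = ∧` for `x = M - e + i`.
-/

namespace IsBetaSet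

variable {X : Set ℤ}

lemma le_topB (hX : IsBetaSet X) {x : ℤ} (hx : x ∈ X) : x ≤ topB X :=
  let ⟨C, hC⟩ := hX.2
  le_csSup ⟨C, fun y hy => le_of_not_gt fun h => hC y h.le hy⟩ hx

lemma mem_of_lt_botB (hX : IsBetaSet X) {z : ℤ} (hz : z < botB X) : z ∈ X :=
  let ⟨_, hw, hzw⟩ := exists_lt_of_lt_csSup hX.1 hz
  hw z hzw

lemma subset_Iic (hX : IsBetaSet X) {b : ℤ} (hb : topB X ≤ b) : X ⊆ Set.Iic b :=
  fun _ hx => (hX.le_topB hx).trans hb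

lemma Iic_subset (hX : IsBetaSet X) {a b e : ℤ} (hab : b - a = e - 1) (ha : a ≤ botB X) :
    Set.Iic (b - e) ⊆ X :=
  fun z hz => hX.mem_of_lt_botB (by rw [Set.mem_Iic] at hz; omega)

end IsBetaSet

lemma rightSet_leftSet_cases (X₁ X₂ : Set ℤ) (b₁ b₂ : ℤ) :
    (rightSet X₁ X₂ b₁ b₂ = X₂ ∧ leftSet X₁ X₂ b₁ b₂ = X₁ ∧ max b₁ b₂ = b₂ ∧ min b₁ b₂ = b₁) ∨
    (rightSet X₁ X₂ b₁ b₂ = X₁ ∧ leftSet X₁ X₂ b₁ b₂ = X₂ ∧ max b₁ b₂ = b₁ ∧ min b₁ b₂ = b₂) := by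
  unfold rightSet leftSet
  by_cases h : b₁ < b₂
  · simp [h, h.le]
  · simp [h, not_lt.1 h]

lemma hasCohook_iff_rightSet_leftSet (e : ℤ) (X₁ X₂ : Set ℤ) (b₁ b₂ : ℤ) :
    HasCohook e (X₁, X₂) ↔
      (∃ x, x ∈ rightSet X₁ X₂ b₁ b₂ ∧ x - e ∉ leftSet X₁ X₂ b₁ b₂) ∨
      (∃ x, x ∈ leftSet X₁ X₂ b₁ b₂ ∧ x - e ∉ rightSet X₁ X₂ b₁ b₂) := by
  rcases rightSet_leftSet_cases X₁ X₂ b₁ b₂ with ⟨hR, hL, -⟩ | ⟨hR, hL, -⟩ <;>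
    simp only [HasCohook, hR, hL, or_comm]

lemma wud_eq_up_iff (d : ℤ) (X₁ X₂ : Set ℤ) (b₁ b₂ i : ℤ) :
    wud d X₁ X₂ b₁ b₂ i = UD.up ↔
      max b₁ b₂ - d / 2 + i ∈ rightSet X₁ X₂ b₁ b₂ ∧
        max b₁ b₂ - d / 2 + i - |b₂ - b₁| ∉ leftSet X₁ X₂ b₁ b₂ := by
  unfold wud
  split_ifs <;> simp_all

lemma abs_sub_eq_of_middleLen_eq_zero {d b₁ b₂ : ℤ} (h : middleLen d b₁ b₂ = 0) :
    |b₂ - b₁| = d / 2 := by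
  unfold middleLen at h
  omega

lemma min_eq_of_middleLen_eq_zero {d b₁ b₂ : ℤ} (h : middleLen d b₁ b₂ = 0) :
    min b₁ b₂ = max b₁ b₂ - d / 2 := by
  have := max_sub_min_eq_abs b₁ b₂
  rw [abs_sub_eq_of_middleLen_eq_zero h] at this
  omega

namespace IsDSmallWith

variable {d a₁ b₁ a₂ b₂ : ℤ} {X₁ X₂ : Set ℤ}

lemma rightSet_subset_Iic (hsm : IsDSmallWith d X₁ X₂ a₁ b₁ a₂ b₂)
    (hX₁ : IsBetaSet X₁) (hX₂ : IsBetaSet X₂) :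
    rightSet X₁ X₂ b₁ b₂ ⊆ Set.Iic (max b₁ b₂) := by
  rcases rightSet_leftSet_cases X₁ X₂ b₁ b₂ with ⟨hR, -, hmax, -⟩ | ⟨hR, -, hmax, -⟩ <;>
    rw [hR, hmax]
  exacts [hX₂.subset_Iic hsm.top₂, hX₁.subset_Iic hsm.top₁]

lemma Iic_subset_rightSet (hsm : IsDSmallWith d X₁ X₂ a₁ b₁ a₂ b₂)
    (hX₁ : IsBetaSet X₁) (hX₂ : IsBetaSet X₂) :
    Set.Iic (max b₁ b₂ - d / 2) ⊆ rightSet X₁ X₂ b₁ b₂ := by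
  rcases rightSet_leftSet_cases X₁ X₂ b₁ b₂ with ⟨hR, -, hmax, -⟩ | ⟨hR, -, hmax, -⟩ <;>
    rw [hR, hmax]
  exacts [hX₂.Iic_subset hsm.len₂ hsm.bot₂, hX₁.Iic_subset hsm.len₁ hsm.bot₁]

lemma leftSet_subset_Iic (hsm : IsDSmallWith d X₁ X₂ a₁ b₁ a₂ b₂)
    (hX₁ : IsBetaSet X₁) (hX₂ : IsBetaSet X₂) :
    leftSet X₁ X₂ b₁ b₂ ⊆ Set.Iic (min b₁ b₂) := by
  rcases rightSet_leftSet_cases X₁ X₂ b₁ b₂ with ⟨-, hL, -, hmin⟩ | ⟨-, hL, -, hmin⟩ <;>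
    rw [hL, hmin]
  exacts [hX₁.subset_Iic hsm.top₁, hX₂.subset_Iic hsm.top₂]

lemma Iic_subset_leftSet (hsm : IsDSmallWith d X₁ X₂ a₁ b₁ a₂ b₂)
    (hX₁ : IsBetaSet X₁) (hX₂ : IsBetaSet X₂) :
    Set.Iic (min b₁ b₂ - d / 2) ⊆ leftSet X₁ X₂ b₁ b₂ := by
  rcases rightSet_leftSet_cases X₁ X₂ b₁ b₂ with ⟨-, hL, -, hmin⟩ | ⟨-, hL, -, hmin⟩ <;>
    rw [hL, hmin]
  exacts [hX₁.Iic_subset hsm.len₁ hsm.bot₁, hX₂.Iic_subset hsm.len₂ hsm.bot₂]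

lemma sub_mem_rightSet_of_mem_leftSet (hsm : IsDSmallWith d X₁ X₂ a₁ b₁ a₂ b₂)
    (hX₁ : IsBetaSet X₁) (hX₂ : IsBetaSet X₂) (hd : 0 ≤ d) (hmid : middleLen d b₁ b₂ = 0)
    {x : ℤ} (hx : x ∈ leftSet X₁ X₂ b₁ b₂) :
    x - d / 2 ∈ rightSet X₁ X₂ b₁ b₂ := by
  have hx_le : x ≤ min b₁ b₂ := hsm.leftSet_subset_Iic hX₁ hX₂ hx
  rw [min_eq_of_middleLen_eq_zero hmid] at hx_le
  exact hsm.Iic_subset_rightSet hX₁ hX₂ (by rw [Set.mem_Iic]; omega)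

lemma mem_Ioc_of_sub_notMem_leftSet (hsm : IsDSmallWith d X₁ X₂ a₁ b₁ a₂ b₂)
    (hX₁ : IsBetaSet X₁) (hX₂ : IsBetaSet X₂) (hmid : middleLen d b₁ b₂ = 0)
    {x : ℤ} (hx : x ∈ rightSet X₁ X₂ b₁ b₂) (hxe : x - d / 2 ∉ leftSet X₁ X₂ b₁ b₂) :
    x ∈ Set.Ioc (max b₁ b₂ - d / 2) (max b₁ b₂) := by
  have hx_gt : min b₁ b₂ - d / 2 < x - d / 2 :=
    lt_of_not_ge fun h => hxe (hsm.Iic_subset_leftSet hX₁ hX₂ h)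
  rw [min_eq_of_middleLen_eq_zero hmid] at hx_gt
  exact ⟨by omega, hsm.rightSet_subset_Iic hX₁ hX₂ hx⟩

lemma cohook_rightSet_iff (hsm : IsDSmallWith d X₁ X₂ a₁ b₁ a₂ b₂)
    (hX₁ : IsBetaSet X₁) (hX₂ : IsBetaSet X₂) (hmid : middleLen d b₁ b₂ = 0) (x : ℤ) :
    (x ∈ rightSet X₁ X₂ b₁ b₂ ∧ x - d / 2 ∉ leftSet X₁ X₂ b₁ b₂) ↔
      ∃ i : ℤ, 1 ≤ i ∧ i ≤ d / 2 ∧ x = max b₁ b₂ - d / 2 + i ∧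
        wud d X₁ X₂ b₁ b₂ i = UD.up := by
  simp only [wud_eq_up_iff, abs_sub_eq_of_middleLen_eq_zero hmid]
  constructor
  · rintro ⟨hx, hxe⟩
    obtain ⟨hx_gt, hx_le⟩ := hsm.mem_Ioc_of_sub_notMem_leftSet hX₁ hX₂ hmid hx hxe
    refine ⟨x - (max b₁ b₂ - d / 2), by omega, by omega, by ring, ?_⟩
    rw [add_sub_cancel]
    exact ⟨hx, hxe⟩
  · rintro ⟨i, -, -, rfl, hi⟩
    exact hi

end IsDSmallWith

theorem stmt9_general (d : ℤ) (hd : 2 ≤ d)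
    (X₁ X₂ : Set ℤ) (hX₁ : IsBetaSet X₁) (hX₂ : IsBetaSet X₂)
    (a₁ b₁ a₂ b₂ : ℤ) (hsm : IsDSmallWith d X₁ X₂ a₁ b₁ a₂ b₂)
    (hmid : middleLen d b₁ b₂ = 0) :
    (∀ x : ℤ, ¬ (x ∈ leftSet X₁ X₂ b₁ b₂ ∧ x - d / 2 ∉ rightSet X₁ X₂ b₁ b₂)) ∧
    (∀ x : ℤ, (x ∈ rightSet X₁ X₂ b₁ b₂ ∧ x - d / 2 ∉ leftSet X₁ X₂ b₁ b₂) ↔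
      ∃ i : ℤ, 1 ≤ i ∧ i ≤ d / 2 ∧ x = max b₁ b₂ - d / 2 + i ∧
        wud d X₁ X₂ b₁ b₂ i = UD.up) ∧
    (¬ HasCohook (d / 2) (X₁, X₂) ↔
      ∀ i : ℤ, 1 ≤ i → i ≤ d / 2 → wud d X₁ X₂ b₁ b₂ i ≠ UD.up) := by
  have hleft : ∀ x, x ∈ leftSet X₁ X₂ b₁ b₂ → x - d / 2 ∈ rightSet X₁ X₂ b₁ b₂ :=
    fun x => hsm.sub_mem_rightSet_of_mem_leftSet hX₁ hX₂ (by omega) hmid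
  have hright := hsm.cohook_rightSet_iff hX₁ hX₂ hmid
  refine ⟨fun x hx => hx.2 (hleft x hx.1), hright, ?_⟩
  rw [hasCohook_iff_rightSet_leftSet (d / 2) X₁ X₂ b₁ b₂]
  constructor
  · intro hno i hi₁ hi₂ hup
    exact hno (Or.inl ⟨_, (hright _).2 ⟨i, hi₁, hi₂, rfl, hup⟩⟩)
  · rintro hall (⟨x, hx⟩ | ⟨x, hx, hxe⟩)
    · obtain ⟨i, hi₁, hi₂, -, hup⟩ := (hright x).1 hx
      exact hall i hi₁ hi₂ hup
    · exact hxe (hleft x hx)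

/-- For a `d`-small symbol `Θ = (X₁,X₂)` with defining intervals
whose middle region has cardinality `0` (right region `[m+1, m+d/2]` in row `r`, left
region in row `l`): the `d/2`-cohooks of `Θ` are exactly the pairs `(m+i, m+i-d/2)` in
row `r` where `w_i = ∧`; there is no `d/2`-cohook in row `l`; and `Θ` has no
`d/2`-cohook at all iff `w_ud(Θ)` contains no `∧`. -/
theorem stmt9 (d : ℤ) (hd : 2 ≤ d) (hdE : Even d)
    (X₁ X₂ : Set ℤ) (hX₁ : IsBetaSet X₁) (hX₂ : IsBetaSet X₂)
    (a₁ b₁ a₂ b₂ : ℤ) (hsm : IsDSmallWith d X₁ X₂ a₁ b₁ a₂ b₂)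
    (hmid : middleLen d b₁ b₂ = 0) :
    (∀ x : ℤ, ¬ (x ∈ leftSet X₁ X₂ b₁ b₂ ∧ x - d / 2 ∉ rightSet X₁ X₂ b₁ b₂)) ∧
    (∀ x : ℤ, (x ∈ rightSet X₁ X₂ b₁ b₂ ∧ x - d / 2 ∉ leftSet X₁ X₂ b₁ b₂) ↔
      ∃ i : ℤ, 1 ≤ i ∧ i ≤ d / 2 ∧ x = max b₁ b₂ - d / 2 + i ∧
        wud d X₁ X₂ b₁ b₂ i = UD.up) ∧
    (¬ HasCohook (d / 2) (X₁, X₂) ↔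
      ∀ i : ℤ, 1 ≤ i → i ≤ d / 2 → wud d X₁ X₂ b₁ b₂ i ≠ UD.up) :=
  stmt9_general d hd X₁ X₂ hX₁ hX₂ a₁ b₁ a₂ b₂ hsm hmid
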